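/- Let Z be a standard Gaussian and ε ~ Uniform[−1/2,1/2] independent of Z. Then the function ρ(s) = h(√s·Z + ε), where h denotes differential entropy, is strictly concave on (0, ∞). -/

import Mathlib

open MeasureTheory ProbabilityTheory

/-- The density of `√s·Z + ε` where `Z` is standard Gaussian and `ε ~ Uniform[−1/2,1/2]` is
independent of `Z`: the convolution of the `N(0, s)` density with the uniform density. -/
noncomputable def ditherGaussDensity (s : ℝ) (x : ℝ) : ℝ :=
  ∫ u in Set.Icc (-(1 / 2) : ℝ) (1 / 2), gaussianPDFReal 0 (Real.toNNReal s) (x - u)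

/-- The differential entropy `h(√s·Z + ε) = −∫ p log p`. -/
noncomputable def ditherGaussEntropy (s : ℝ) : ℝ :=
  -∫ x : ℝ, ditherGaussDensity s x * Real.log (ditherGaussDensity s x)

/-!
The density `p` of `√s·Z + ε` solves the heat equation `∂ₛ p = ½ ∂ₓ² p`, because the Gaussian
kernel does. Differentiating under the integral sign and integrating by parts in `x` gives
de Bruijn's identity `ρ'(s) = J(s) / 2` for the Fisher information `J(s) = ∫ p'² / p`, and in the
same way McKean's identity `J'(s) = -∫ p ((log p)'')²`. The last integrand is continuous,
nonnegative and positive at `x = 0`, where `p' = 0` and `p'' < 0`; hence `J` and so `ρ'` are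
strictly decreasing.

All these manipulations rest on one estimate: for `s` in a compact subset of `(0, ∞)`, the
ratios `p⁽ᵏ⁾ / p` (`k ≤ 3`) and `log p` grow at most polynomially in `x` while `p` decays like a
Gaussian, so every integrand, being `p` times a polynomial in these quantities, is dominated by a
single Gaussian.
-/

open Real Set Filter Topology

namespace DitherGauss

lemma exists_one_add_sq_pow_le_mul_exp (n : ℕ) {γ : ℝ} (hγ : 0 < γ) :
    ∃ C, ∀ x : ℝ, (1 + x ^ 2) ^ n ≤ C * exp (x ^ 2 / γ) := by
  set b := (γ * (n + 1))⁻¹ with hb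
  have hb0 : 0 < b := by positivity
  refine ⟨(1 + b⁻¹) ^ n, fun x ↦ ?_⟩
  have hbase : 1 + x ^ 2 ≤ (1 + b⁻¹) * exp (b * x ^ 2) := by
    have hmul : (1 + b⁻¹) * (1 + b * x ^ 2) = 1 + x ^ 2 + (b * x ^ 2 + b⁻¹) := by
      field_simp; ring
    calc 1 + x ^ 2 ≤ (1 + b⁻¹) * (1 + b * x ^ 2) := by
          rw [hmul]; linarith [mul_nonneg hb0.le (sq_nonneg x), inv_pos.2 hb0]
      _ ≤ (1 + b⁻¹) * exp (b * x ^ 2) := by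
        gcongr; linarith [add_one_le_exp (b * x ^ 2)]
  have hexp : n * (b * x ^ 2) ≤ x ^ 2 / γ := by
    have hn : (n : ℝ) * (n + 1 : ℝ)⁻¹ ≤ 1 := by
      rw [mul_inv_le_iff₀ (by positivity)]; linarith
    calc n * (b * x ^ 2) = n * (n + 1 : ℝ)⁻¹ * (x ^ 2 / γ) := by rw [hb]; field_simp
      _ ≤ 1 * (x ^ 2 / γ) := by gcongr
      _ = x ^ 2 / γ := one_mul _
  calc (1 + x ^ 2) ^ n ≤ ((1 + b⁻¹) * exp (b * x ^ 2)) ^ n := by gcongr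
    _ = (1 + b⁻¹) ^ n * exp (n * (b * x ^ 2)) := by rw [mul_pow, ← exp_nat_mul]
    _ ≤ (1 + b⁻¹) ^ n * exp (x ^ 2 / γ) := by gcongr

lemma tendsto_exp_neg_sq_div_atTop {γ : ℝ} (hγ : 0 < γ) :
    Tendsto (fun x : ℝ ↦ exp (-x ^ 2 / γ)) atTop (𝓝 0) := by
  have h := ((tendsto_pow_atTop (α := ℝ) two_ne_zero).atTop_div_const hγ)
  exact tendsto_exp_atBot.comp (by simpa [neg_div] using h)

lemma tendsto_exp_neg_sq_div_atBot {γ : ℝ} (hγ : 0 < γ) :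
    Tendsto (fun x : ℝ ↦ exp (-x ^ 2 / γ)) atBot (𝓝 0) := by
  refine ((tendsto_exp_neg_sq_div_atTop hγ).comp tendsto_neg_atBot_atTop).congr fun x ↦ ?_
  simp

lemma integrable_exp_neg_sq_div {γ : ℝ} (hγ : 0 < γ) (C : ℝ) :
    Integrable fun x : ℝ ↦ C * exp (-x ^ 2 / γ) := by
  simpa [neg_div, div_eq_inv_mul] using (integrable_exp_neg_mul_sq (inv_pos.2 hγ)).const_mul C

lemma exists_Icc_inv_mem_nhds {s : ℝ} (hs : 0 < s) : ∃ K, 1 ≤ K ∧ Icc K⁻¹ K ∈ 𝓝 s := by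
  have hinv := inv_pos.2 hs
  refine ⟨s + s⁻¹ + 1, by linarith, Icc_mem_nhds ?_ (by linarith)⟩
  rw [inv_lt_iff_one_lt_mul₀ (by positivity)]
  have : s * s⁻¹ = 1 := mul_inv_cancel₀ hs.ne'
  nlinarith

lemma pos_and_inv_le_of_mem_Icc {K s : ℝ} (hK : 1 ≤ K) (hs : s ∈ Icc K⁻¹ K) : 0 < s ∧ s⁻¹ ≤ K := by
  have hs₀ : 0 < s := lt_of_lt_of_le (by positivity) hs.1
  exact ⟨hs₀, by simpa using inv_anti₀ (by positivity) hs.1⟩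

/-- A Gaussian bound in `x`, uniform for `s` in compact subsets of `(0, ∞)`: every such subset lies
in some `Icc K⁻¹ K`. -/
def HasGaussianDecay (F : ℝ → ℝ → ℝ) : Prop :=
  ∀ K, 1 ≤ K → ∃ C γ, 0 < γ ∧ ∀ s ∈ Icc K⁻¹ K, ∀ x, |F s x| ≤ C * exp (-x ^ 2 / γ)

namespace HasGaussianDecay

variable {F F' : ℝ → ℝ → ℝ} {s : ℝ}

lemma exists_bound (hF : HasGaussianDecay F) (hs : 0 < s) :
    ∃ C γ, 0 < γ ∧ ∀ x, |F s x| ≤ C * exp (-x ^ 2 / γ) := by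
  obtain ⟨K, hK, hmem⟩ := exists_Icc_inv_mem_nhds hs
  obtain ⟨C, γ, hγ, hb⟩ := hF K hK
  exact ⟨C, γ, hγ, hb s (mem_of_mem_nhds hmem)⟩

lemma integrable (hF : HasGaussianDecay F) (hs : 0 < s) (hm : AEStronglyMeasurable (F s)) :
    Integrable (F s) := by
  obtain ⟨C, γ, hγ, hb⟩ := hF.exists_bound hs
  exact (integrable_exp_neg_sq_div hγ C).mono' hm (ae_of_all _ hb)

lemma tendsto_atTop (hF : HasGaussianDecay F) (hs : 0 < s) : Tendsto (F s) atTop (𝓝 0) := by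
  obtain ⟨C, γ, hγ, hb⟩ := hF.exists_bound hs
  exact squeeze_zero_norm hb (by simpa using (tendsto_exp_neg_sq_div_atTop hγ).const_mul C)

lemma tendsto_atBot (hF : HasGaussianDecay F) (hs : 0 < s) : Tendsto (F s) atBot (𝓝 0) := by
  obtain ⟨C, γ, hγ, hb⟩ := hF.exists_bound hs
  exact squeeze_zero_norm hb (by simpa using (tendsto_exp_neg_sq_div_atBot hγ).const_mul C)

lemma integral_deriv_eq_zero (hF : HasGaussianDecay F) (hs : 0 < s) {f' : ℝ → ℝ}
    (hf' : Integrable f') (hd : ∀ x, HasDerivAt (F s) (f' x) x) : ∫ x, f' x = 0 := by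
  rw [integral_of_hasDerivAt_of_tendsto hd hf' (hF.tendsto_atBot hs) (hF.tendsto_atTop hs),
    sub_self]

lemma div_const (hF : HasGaussianDecay F) (c : ℝ) : HasGaussianDecay fun s x ↦ F s x / c := by
  intro K hK
  obtain ⟨C, γ, hγ, hb⟩ := hF K hK
  refine ⟨C / |c|, γ, hγ, fun s hs x ↦ ?_⟩
  rw [abs_div, div_mul_eq_mul_div]
  exact div_le_div_of_nonneg_right (hb s hs x) (abs_nonneg c)

lemma hasDerivAt_integral (hF : HasGaussianDecay F) (hF' : HasGaussianDecay F') (hs : 0 < s)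
    (hm : ∀ t, 0 < t → AEStronglyMeasurable (F t)) (hm' : AEStronglyMeasurable (F' s))
    (hd : ∀ t, 0 < t → ∀ x, HasDerivAt (fun t ↦ F t x) (F' t x) t) :
    HasDerivAt (fun t ↦ ∫ x, F t x) (∫ x, F' s x) s := by
  obtain ⟨K, hK, hmem⟩ := exists_Icc_inv_mem_nhds hs
  obtain ⟨C, γ, hγ, hb⟩ := hF' K hK
  have hpos : ∀ t ∈ Icc K⁻¹ K, 0 < t := fun t ht ↦ lt_of_lt_of_le (by positivity) ht.1
  refine (hasDerivAt_integral_of_dominated_loc_of_deriv_le hmem ?_ (hF.integrable hs (hm s hs))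
    hm' (ae_of_all _ fun x t ht ↦ hb t ht x) (integrable_exp_neg_sq_div hγ C)
    (ae_of_all _ fun x t ht ↦ hd t (hpos t ht) x)).2
  filter_upwards [Ioi_mem_nhds hs] with t ht using hm t ht

end HasGaussianDecay

noncomputable def windowIntegral (h : ℝ → ℝ) (x : ℝ) : ℝ :=
  ∫ v in (x - 2⁻¹)..(x + 2⁻¹), h v

section windowIntegral

variable {h h' k : ℝ → ℝ} {x c : ℝ}

lemma abs_le_of_mem_window {x v : ℝ} (hv : v ∈ Icc (x - 2⁻¹) (x + 2⁻¹)) : |v| ≤ |x| + 2⁻¹ := by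
  rw [abs_le]; constructor <;> linarith [hv.1, hv.2, neg_abs_le x, le_abs_self x]

lemma hasDerivAt_windowIntegral_of_continuous (hc : Continuous h) (x : ℝ) :
    HasDerivAt (windowIntegral h) (h (x + 2⁻¹) - h (x - 2⁻¹)) x := by
  have hF : ∀ y, HasDerivAt (fun u ↦ ∫ v in (0 : ℝ)..u, h v) (h y) y := fun y ↦
    intervalIntegral.integral_hasDerivAt_right (hc.intervalIntegrable _ _)
      (hc.stronglyMeasurableAtFilter _ _) hc.continuousAt
  have hsub := ((hF _).comp x ((hasDerivAt_id x).add_const 2⁻¹)).sub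
    ((hF _).comp x ((hasDerivAt_id x).sub_const 2⁻¹))
  refine (hsub.congr_deriv (by simp)).congr_of_eventuallyEq (Eventually.of_forall fun y ↦ ?_)
  exact (intervalIntegral.integral_interval_sub_left (hc.intervalIntegrable _ _)
    (hc.intervalIntegrable _ _)).symm

@[fun_prop]
lemma continuous_windowIntegral (hc : Continuous h) : Continuous (windowIntegral h) :=
  continuous_iff_continuousAt.2 fun x ↦ (hasDerivAt_windowIntegral_of_continuous hc x).continuousAt

lemma windowIntegral_eq_sub (hd : ∀ v, HasDerivAt h (h' v) v) (hc : Continuous h') (x : ℝ) :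
    windowIntegral h' x = h (x + 2⁻¹) - h (x - 2⁻¹) :=
  intervalIntegral.integral_eq_sub_of_hasDerivAt (fun v _ ↦ hd v) (hc.intervalIntegrable _ _)

lemma hasDerivAt_windowIntegral (hd : ∀ v, HasDerivAt h (h' v) v) (hc : Continuous h') (x : ℝ) :
    HasDerivAt (windowIntegral h) (windowIntegral h' x) x := by
  rw [windowIntegral_eq_sub hd hc]
  exact hasDerivAt_windowIntegral_of_continuous
    (continuous_iff_continuousAt.2 fun v ↦ (hd v).continuousAt) x

lemma windowIntegral_pos (hc : Continuous k) (hk : ∀ v, 0 < k v) (x : ℝ) :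
    0 < windowIntegral k x :=
  intervalIntegral.intervalIntegral_pos_of_pos_on (hc.intervalIntegrable _ _) (fun v _ ↦ hk v)
    (by linarith)

lemma abs_windowIntegral_le (hh : Continuous h) (hk : Continuous k)
    (hb : ∀ v ∈ Icc (x - 2⁻¹) (x + 2⁻¹), |h v| ≤ c * k v) :
    |windowIntegral h x| ≤ c * windowIntegral k x := by
  have hle : x - 2⁻¹ ≤ x + 2⁻¹ := by linarith
  rw [windowIntegral, windowIntegral, ← intervalIntegral.integral_const_mul]
  exact (intervalIntegral.abs_integral_le_integral_abs hle).trans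
    (intervalIntegral.integral_mono_on hle (hh.abs.intervalIntegrable _ _)
      ((hk.const_mul c).intervalIntegrable _ _) hb)

lemma le_windowIntegral (hk : Continuous k) (hb : ∀ v ∈ Icc (x - 2⁻¹) (x + 2⁻¹), c ≤ k v) :
    c ≤ windowIntegral k x := by
  have h := intervalIntegral.integral_mono_on (by linarith) (intervalIntegrable_const (μ := volume))
    (hk.intervalIntegrable _ _) hb
  rwa [intervalIntegral.integral_const, show x + 2⁻¹ - (x - 2⁻¹) = 1 by ring, one_smul] at h

lemma windowIntegral_le (hk : Continuous k) (hb : ∀ v ∈ Icc (x - 2⁻¹) (x + 2⁻¹), k v ≤ c) :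
    windowIntegral k x ≤ c := by
  have h := intervalIntegral.integral_mono_on (by linarith) (hk.intervalIntegrable _ _)
    (intervalIntegrable_const (μ := volume)) hb
  rwa [intervalIntegral.integral_const, show x + 2⁻¹ - (x - 2⁻¹) = 1 by ring, one_smul] at h

end windowIntegral

noncomputable def gaussKernel (s x : ℝ) : ℝ := (√(2 * π * s))⁻¹ * exp (-x ^ 2 / (2 * s))

noncomputable def gaussKernel' (s x : ℝ) : ℝ := -(x / s) * gaussKernel s x

noncomputable def gaussKernel'' (s x : ℝ) : ℝ := (x ^ 2 - s) / s ^ 2 * gaussKernel s x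

noncomputable def gaussKernel''' (s x : ℝ) : ℝ := (3 * s * x - x ^ 3) / s ^ 3 * gaussKernel s x

section gaussKernel

variable {s : ℝ}

lemma gaussKernel_pos (hs : 0 < s) (x : ℝ) : 0 < gaussKernel s x := by
  unfold gaussKernel; positivity

@[fun_prop] lemma continuous_gaussKernel (s : ℝ) : Continuous (gaussKernel s) := by
  unfold gaussKernel; fun_prop

@[fun_prop] lemma continuous_gaussKernel' (s : ℝ) : Continuous (gaussKernel' s) := by
  unfold gaussKernel'; fun_prop

@[fun_prop] lemma continuous_gaussKernel'' (s : ℝ) : Continuous (gaussKernel'' s) := by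
  unfold gaussKernel''; fun_prop

@[fun_prop] lemma continuous_gaussKernel''' (s : ℝ) : Continuous (gaussKernel''' s) := by
  unfold gaussKernel'''; fun_prop

lemma gaussianPDFReal_eq_gaussKernel (hs : 0 ≤ s) (x : ℝ) :
    gaussianPDFReal 0 s.toNNReal x = gaussKernel s x := by
  rw [gaussianPDFReal, gaussKernel, coe_toNNReal s hs, sub_zero]

lemma gaussKernel_scaling (hs : 0 < s) (x : ℝ) :
    gaussKernel s x = (√s)⁻¹ * gaussKernel 1 (x / √s) := by
  have hss : √s ≠ 0 := (sqrt_pos.2 hs).ne'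
  rw [gaussKernel, gaussKernel, div_pow, sq_sqrt hs.le, sqrt_mul (by positivity), mul_one]
  field_simp

lemma gaussKernel_le_gaussKernel (hs : 0 < s) {a b : ℝ} (h : b ^ 2 ≤ a ^ 2) :
    gaussKernel s a ≤ gaussKernel s b := by
  unfold gaussKernel
  gcongr

lemma hasDerivAt_gaussKernel (hs : 0 < s) (x : ℝ) :
    HasDerivAt (gaussKernel s) (gaussKernel' s x) x := by
  have h : HasDerivAt (fun y ↦ -y ^ 2 / (2 * s)) (-(x / s)) x :=
    ((hasDerivAt_pow 2 x).neg.div_const (2 * s)).congr_deriv (by field_simp; ring)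
  exact (h.exp.const_mul _).congr_deriv (by rw [gaussKernel', gaussKernel]; ring)

lemma hasDerivAt_gaussKernel' (hs : 0 < s) (x : ℝ) :
    HasDerivAt (gaussKernel' s) (gaussKernel'' s x) x := by
  have h := ((hasDerivAt_id x).div_const s).fun_neg.mul (hasDerivAt_gaussKernel hs x)
  exact h.congr_deriv (by simp only [gaussKernel'', gaussKernel', id]; field_simp; ring)

lemma hasDerivAt_gaussKernel'' (hs : 0 < s) (x : ℝ) :
    HasDerivAt (gaussKernel'' s) (gaussKernel''' s x) x := by
  have h := (((hasDerivAt_pow 2 x).sub_const s).div_const (s ^ 2)).mul (hasDerivAt_gaussKernel hs x)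
  exact h.congr_deriv (by simp only [gaussKernel''', gaussKernel']; field_simp; ring)

lemma hasDerivAt_gaussKernel_variance (hs : 0 < s) (x : ℝ) :
    HasDerivAt (fun s ↦ gaussKernel s x) (gaussKernel'' s x / 2) s := by
  have h2πs : 0 < 2 * π * s := by positivity
  have hnorm : HasDerivAt (fun s ↦ (√(2 * π * s))⁻¹) (-(√(2 * π * s))⁻¹ / (2 * s)) s := by
    have h := (((hasDerivAt_id s).const_mul (2 * π)).sqrt h2πs.ne').inv (sqrt_pos.2 h2πs).ne'
    refine h.congr_deriv ?_
    have := sq_sqrt h2πs.le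
    simp only [id]
    field_simp
    rw [this]
  have hexp : HasDerivAt (fun s ↦ exp (-x ^ 2 / (2 * s)))
      (x ^ 2 / (2 * s ^ 2) * exp (-x ^ 2 / (2 * s))) s := by
    have h := (((hasDerivAt_id s).const_mul 2).fun_inv (by positivity)).const_mul (-x ^ 2)
    simp only [id, ← div_eq_mul_inv] at h
    exact h.exp.congr_deriv (by field_simp)
  exact (hnorm.mul hexp).congr_deriv (by simp only [gaussKernel'', gaussKernel]; field_simp; ring)

-- With `a = v / s` and `t = s⁻¹`, these are, up to sign, the ratios `∂ₓᵏ g / g` at `v`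
-- for `k = 1, 2, 3`.
lemma abs_gaussKernel_coeffs_le {a t B : ℝ} (ha : |a| ≤ B) (ht₀ : 0 ≤ t) (ht : t ≤ B) (hB : 1 ≤ B) :
    |a| ≤ 4 * B ^ 3 ∧ |a ^ 2 - t| ≤ 4 * B ^ 3 ∧ |3 * a * t - a ^ 3| ≤ 4 * B ^ 3 := by
  have hB2 : B ≤ B ^ 2 := by nlinarith
  have hB3 : B ^ 2 ≤ B ^ 3 := by nlinarith
  have ha2 : a ^ 2 ≤ B ^ 2 := by rw [← sq_abs]; gcongr
  have ha3 : |a| ^ 3 ≤ B ^ 3 := by gcongr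
  refine ⟨by linarith, ?_, ?_⟩
  · rw [abs_le]; constructor <;> nlinarith [sq_nonneg a]
  · calc |3 * a * t - a ^ 3| ≤ 3 * |a| * t + |a| ^ 3 := by
          refine (abs_sub _ _).trans (le_of_eq ?_)
          rw [abs_mul, abs_mul, abs_of_nonneg ht₀, abs_pow]; norm_num
      _ ≤ 4 * B ^ 3 := by nlinarith [abs_nonneg a]

lemma abs_gaussKernel'_le (hs : 0 < s) {v B : ℝ} (hv : |v / s| ≤ B) (hsB : s⁻¹ ≤ B) (hB : 1 ≤ B) :
    |gaussKernel' s v| ≤ 4 * B ^ 3 * gaussKernel s v := by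
  rw [gaussKernel', abs_mul, abs_neg, abs_of_pos (gaussKernel_pos hs v)]
  refine mul_le_mul_of_nonneg_right ?_ (gaussKernel_pos hs v).le
  exact (abs_gaussKernel_coeffs_le hv (inv_pos.2 hs).le hsB hB).1

lemma abs_gaussKernel''_le (hs : 0 < s) {v B : ℝ} (hv : |v / s| ≤ B) (hsB : s⁻¹ ≤ B) (hB : 1 ≤ B) :
    |gaussKernel'' s v| ≤ 4 * B ^ 3 * gaussKernel s v := by
  rw [gaussKernel'', abs_mul, abs_of_pos (gaussKernel_pos hs v),
    show (v ^ 2 - s) / s ^ 2 = (v / s) ^ 2 - s⁻¹ by field_simp]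
  exact mul_le_mul_of_nonneg_right (abs_gaussKernel_coeffs_le hv (inv_pos.2 hs).le hsB hB).2.1
    (gaussKernel_pos hs v).le

lemma abs_gaussKernel'''_le (hs : 0 < s) {v B : ℝ} (hv : |v / s| ≤ B) (hsB : s⁻¹ ≤ B) (hB : 1 ≤ B) :
    |gaussKernel''' s v| ≤ 4 * B ^ 3 * gaussKernel s v := by
  rw [gaussKernel''', abs_mul, abs_of_pos (gaussKernel_pos hs v),
    show (3 * s * v - v ^ 3) / s ^ 3 = 3 * (v / s) * s⁻¹ - (v / s) ^ 3 by field_simp]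
  exact mul_le_mul_of_nonneg_right (abs_gaussKernel_coeffs_le hv (inv_pos.2 hs).le hsB hB).2.2
    (gaussKernel_pos hs v).le

end gaussKernel

noncomputable def density (s x : ℝ) : ℝ := windowIntegral (gaussKernel s) x

noncomputable def density' (s x : ℝ) : ℝ := windowIntegral (gaussKernel' s) x

noncomputable def density'' (s x : ℝ) : ℝ := windowIntegral (gaussKernel'' s) x

noncomputable def density''' (s x : ℝ) : ℝ := windowIntegral (gaussKernel''' s) x

section density

variable {s K : ℝ}

@[fun_prop] lemma continuous_density (s : ℝ) : Continuous (density s) := by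
  unfold density; fun_prop

@[fun_prop] lemma continuous_density' (s : ℝ) : Continuous (density' s) := by
  unfold density'; fun_prop

@[fun_prop] lemma continuous_density'' (s : ℝ) : Continuous (density'' s) := by
  unfold density''; fun_prop

@[fun_prop] lemma continuous_density''' (s : ℝ) : Continuous (density''' s) := by
  unfold density'''; fun_prop

lemma density_pos (hs : 0 < s) (x : ℝ) : 0 < density s x :=
  windowIntegral_pos (continuous_gaussKernel s) (gaussKernel_pos hs) x

lemma hasDerivAt_density (hs : 0 < s) (x : ℝ) : HasDerivAt (density s) (density' s x) x :=
  hasDerivAt_windowIntegral (hasDerivAt_gaussKernel hs) (continuous_gaussKernel' s) x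

lemma hasDerivAt_density' (hs : 0 < s) (x : ℝ) : HasDerivAt (density' s) (density'' s x) x :=
  hasDerivAt_windowIntegral (hasDerivAt_gaussKernel' hs) (continuous_gaussKernel'' s) x

lemma hasDerivAt_density'' (hs : 0 < s) (x : ℝ) : HasDerivAt (density'' s) (density''' s x) x :=
  hasDerivAt_windowIntegral (hasDerivAt_gaussKernel'' hs) (continuous_gaussKernel''' s) x

lemma density'_eq_sub (hs : 0 < s) (x : ℝ) :
    density' s x = gaussKernel s (x + 2⁻¹) - gaussKernel s (x - 2⁻¹) :=
  windowIntegral_eq_sub (hasDerivAt_gaussKernel hs) (continuous_gaussKernel' s) x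

lemma density''_eq_sub (hs : 0 < s) (x : ℝ) :
    density'' s x = gaussKernel' s (x + 2⁻¹) - gaussKernel' s (x - 2⁻¹) :=
  windowIntegral_eq_sub (hasDerivAt_gaussKernel' hs) (continuous_gaussKernel'' s) x

lemma density'''_eq_sub (hs : 0 < s) (x : ℝ) :
    density''' s x = gaussKernel'' s (x + 2⁻¹) - gaussKernel'' s (x - 2⁻¹) :=
  windowIntegral_eq_sub (hasDerivAt_gaussKernel'' hs) (continuous_gaussKernel''' s) x

lemma hasDerivAt_integral_gaussKernel_one_div_sqrt (hs : 0 < s) (y : ℝ) :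
    HasDerivAt (fun s ↦ ∫ t in (0 : ℝ)..y / √s, gaussKernel 1 t) (gaussKernel' s y / 2) s := by
  have hF := intervalIntegral.integral_hasDerivAt_right
    ((continuous_gaussKernel 1).intervalIntegrable 0 (y / √s))
    ((continuous_gaussKernel 1).stronglyMeasurableAtFilter _ _)
    (continuous_gaussKernel 1).continuousAt
  have hsqrt := ((hasDerivAt_sqrt hs.ne').fun_inv (sqrt_pos.2 hs).ne').const_mul y
  simp only [← div_eq_mul_inv] at hsqrt
  refine (hF.comp s hsqrt).congr_deriv ?_
  have := sq_sqrt hs.le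
  rw [gaussKernel', gaussKernel_scaling hs]
  field_simp
  rw [this]
  ring

lemma hasDerivAt_density_variance (hs : 0 < s) (x : ℝ) :
    HasDerivAt (fun s ↦ density s x) (density'' s x / 2) s := by
  have hΦ : ∀ t, 0 < t → density t x = (∫ u in (0 : ℝ)..(x + 2⁻¹) / √t, gaussKernel 1 u) -
      ∫ u in (0 : ℝ)..(x - 2⁻¹) / √t, gaussKernel 1 u := by
    intro t ht
    simp only [density, windowIntegral, gaussKernel_scaling ht]
    rw [intervalIntegral.integral_const_mul,
      intervalIntegral.integral_comp_div _ (sqrt_pos.2 ht).ne',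
      intervalIntegral.integral_interval_sub_left
        ((continuous_gaussKernel 1).intervalIntegrable _ _)
        ((continuous_gaussKernel 1).intervalIntegrable _ _), smul_eq_mul, ← mul_assoc,
      inv_mul_cancel₀ (sqrt_pos.2 ht).ne', one_mul]
  have h := (hasDerivAt_integral_gaussKernel_one_div_sqrt hs (x + 2⁻¹)).sub
    (hasDerivAt_integral_gaussKernel_one_div_sqrt hs (x - 2⁻¹))
  refine (h.congr_deriv ?_).congr_of_eventuallyEq ?_
  · rw [density''_eq_sub hs]; ring
  · filter_upwards [Ioi_mem_nhds hs] with t ht using hΦ t ht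

lemma hasDerivAt_density'_variance (hs : 0 < s) (x : ℝ) :
    HasDerivAt (fun s ↦ density' s x) (density''' s x / 2) s := by
  have h := (hasDerivAt_gaussKernel_variance hs (x + 2⁻¹)).sub
    (hasDerivAt_gaussKernel_variance hs (x - 2⁻¹))
  refine (h.congr_deriv ?_).congr_of_eventuallyEq ?_
  · rw [density'''_eq_sub hs]; ring
  · filter_upwards [Ioi_mem_nhds hs] with t ht using density'_eq_sub ht x

lemma ditherGaussDensity_eq_density (hs : 0 < s) (x : ℝ) :
    ditherGaussDensity s x = density s x := by
  simp only [ditherGaussDensity, gaussianPDFReal_eq_gaussKernel hs.le]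
  rw [integral_Icc_eq_integral_Ioc, ← intervalIntegral.integral_of_le (by norm_num),
    intervalIntegral.integral_comp_sub_left (gaussKernel s) x, density, windowIntegral]
  norm_num

lemma density'_zero (hs : 0 < s) : density' s 0 = 0 := by
  rw [density'_eq_sub hs, gaussKernel, gaussKernel]
  norm_num

lemma density''_zero_neg (hs : 0 < s) : density'' s 0 < 0 := by
  have hg : gaussKernel s (0 - 2⁻¹) = gaussKernel s (0 + 2⁻¹) := by
    rw [gaussKernel, gaussKernel]; norm_num
  rw [density''_eq_sub hs, gaussKernel', gaussKernel', hg]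
  have := gaussKernel_pos hs (0 + 2⁻¹)
  have : 0 < s⁻¹ := inv_pos.2 hs
  field_simp
  nlinarith

lemma density_le_one (hs : 0 < s) (x : ℝ) : density s x ≤ 1 := by
  have hg : gaussianPDFReal 0 s.toNNReal = gaussKernel s :=
    funext (gaussianPDFReal_eq_gaussKernel hs.le)
  have hint : Integrable (gaussKernel s) := hg ▸ integrable_gaussianPDFReal 0 _
  calc density s x = ∫ v in Ioc (x - 2⁻¹) (x + 2⁻¹), gaussKernel s v :=
        intervalIntegral.integral_of_le (by linarith)
    _ ≤ ∫ v, gaussKernel s v :=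
        setIntegral_le_integral hint (ae_of_all _ fun v ↦ (gaussKernel_pos hs v).le)
    _ = 1 := by rw [← hg, integral_gaussianPDFReal_eq_one 0 (by simpa using hs)]

lemma gaussKernel_le_density (hs : 0 < s) (x : ℝ) : gaussKernel s (|x| + 2⁻¹) ≤ density s x :=
  le_windowIntegral (continuous_gaussKernel s) fun v hv ↦ gaussKernel_le_gaussKernel hs <| by
    rw [← sq_abs v]; gcongr; exact abs_le_of_mem_window hv

lemma density_le_exp (hK : 1 ≤ K) (hs : s ∈ Icc K⁻¹ K) (x : ℝ) :
    density s x ≤ K * exp (K / 8 - x ^ 2 / (4 * K)) := by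
  obtain ⟨hs₀, hsK⟩ := pos_and_inv_le_of_mem_Icc hK hs
  refine windowIntegral_le (continuous_gaussKernel s) fun v hv ↦ ?_
  have hnorm : (√(2 * π * s))⁻¹ ≤ K := by
    rw [inv_le_comm₀ (by positivity) (by positivity), le_sqrt (by positivity) (by positivity)]
    have : K⁻¹ ^ 2 ≤ K⁻¹ := by
      rw [sq]; exact mul_le_of_le_one_left (by positivity) (inv_le_one_of_one_le₀ hK)
    nlinarith [hs.1, pi_gt_three]
  have hv2 : x ^ 2 / 2 - 4⁻¹ ≤ v ^ 2 := by nlinarith [hv.1, hv.2, sq_nonneg (x - 2 * v)]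
  have hexp : -v ^ 2 / (2 * s) ≤ K / 8 - x ^ 2 / (4 * K) := by
    have hKs : K⁻¹ ≤ s⁻¹ := inv_anti₀ hs₀ hs.2
    calc -v ^ 2 / (2 * s) = -(v ^ 2 * s⁻¹) / 2 := by field_simp
      _ ≤ -((x ^ 2 / 2 - 4⁻¹) * s⁻¹) / 2 := by gcongr
      _ = s⁻¹ / 8 - x ^ 2 * s⁻¹ / 4 := by ring
      _ ≤ K / 8 - x ^ 2 * K⁻¹ / 4 := by gcongr
      _ = K / 8 - x ^ 2 / (4 * K) := by field_simp
  exact mul_le_mul hnorm (exp_le_exp.2 hexp) (exp_pos _).le (by positivity)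

lemma neg_log_density_le (hs : 0 < s) (x : ℝ) :
    -log (density s x) ≤ π * s + (|x| + 2⁻¹) ^ 2 / (2 * s) := by
  have h2πs : 0 < 2 * π * s := by positivity
  have hlower := log_le_log (gaussKernel_pos hs _) (gaussKernel_le_density hs x)
  rw [gaussKernel, log_mul (by positivity) (exp_pos _).ne', log_inv, log_sqrt h2πs.le,
    log_exp] at hlower
  linarith [log_le_sub_one_of_pos h2πs, neg_div (2 * s) ((|x| + 2⁻¹) ^ 2)]

end density

def RatioBound (s x M : ℝ) : Prop :=
  |density' s x| ≤ M * density s x ∧ |density'' s x| ≤ M * density s x ∧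
    |density''' s x| ≤ M * density s x ∧ |log (density s x)| + 1 ≤ M

section RatioBound

variable {s x M K : ℝ}

lemma ratioBound_of_mem_Icc (hK : 1 ≤ K) (hs : s ∈ Icc K⁻¹ K) (x : ℝ) :
    RatioBound s x (4 * (2 * (1 + x ^ 2) * (1 + K)) ^ 3) := by
  obtain ⟨hs₀, hsK⟩ := pos_and_inv_le_of_mem_Icc hK hs
  set B := 2 * (1 + x ^ 2) * (1 + K) with hB_def
  have hx : |x| + 2⁻¹ ≤ 1 + x ^ 2 := by nlinarith [sq_abs x, abs_nonneg x, sq_nonneg (|x| - 1)]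
  have hB : 1 ≤ B := by nlinarith [sq_nonneg x]
  have hsB : s⁻¹ ≤ B := by nlinarith [sq_nonneg x]
  have hvB : ∀ v ∈ Icc (x - 2⁻¹) (x + 2⁻¹), |v / s| ≤ B := fun v hv ↦ by
    rw [abs_div, abs_of_pos hs₀, div_eq_mul_inv]
    calc |v| * s⁻¹ ≤ (1 + x ^ 2) * K :=
          mul_le_mul ((abs_le_of_mem_window hv).trans hx) hsK (by positivity) (by positivity)
      _ ≤ B := by nlinarith [sq_nonneg x]
  refine ⟨abs_windowIntegral_le (continuous_gaussKernel' s) (continuous_gaussKernel s)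
      fun v hv ↦ abs_gaussKernel'_le hs₀ (hvB v hv) hsB hB,
    abs_windowIntegral_le (continuous_gaussKernel'' s) (continuous_gaussKernel s)
      fun v hv ↦ abs_gaussKernel''_le hs₀ (hvB v hv) hsB hB,
    abs_windowIntegral_le (continuous_gaussKernel''' s) (continuous_gaussKernel s)
      fun v hv ↦ abs_gaussKernel'''_le hs₀ (hvB v hv) hsB hB, ?_⟩
  have hP := density_pos hs₀ x
  rw [abs_of_nonpos (log_nonpos hP.le (density_le_one hs₀ x))]
  have h := neg_log_density_le hs₀ x
  have hx2 : (|x| + 2⁻¹) ^ 2 / (2 * s) ≤ (1 + x ^ 2) ^ 2 * K := by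
    calc (|x| + 2⁻¹) ^ 2 / (2 * s) = (|x| + 2⁻¹) ^ 2 * s⁻¹ / 2 := by ring
      _ ≤ (1 + x ^ 2) ^ 2 * K / 2 := by gcongr
      _ ≤ (1 + x ^ 2) ^ 2 * K := by
        linarith [mul_nonneg (sq_nonneg (1 + x ^ 2)) (by linarith : 0 ≤ K)]
  have hπs : π * s ≤ 4 * K := by nlinarith [pi_lt_four, hs.2, pi_pos]
  have hB3 : B ^ 2 ≤ B ^ 3 := by nlinarith
  have hu : 1 ≤ (1 + x ^ 2) ^ 2 := one_le_pow₀ (by nlinarith [sq_nonneg x])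
  have hBsq : B ^ 2 = 4 * (1 + x ^ 2) ^ 2 * (1 + K) ^ 2 := by rw [hB_def]; ring
  nlinarith [mul_le_mul_of_nonneg_right hu (by linarith : (0:ℝ) ≤ K)]

lemma hasGaussianDecay_of_ratioBound {F : ℝ → ℝ → ℝ} (c : ℝ) (n : ℕ)
    (hF : ∀ s x M, 0 < s → RatioBound s x M → |F s x| ≤ c * M ^ n * density s x) :
    HasGaussianDecay F := by
  intro K hK
  obtain ⟨A, hA⟩ := exists_one_add_sq_pow_le_mul_exp (3 * n) (γ := 8 * K) (by positivity)
  set D := |c| * (4 * (2 * (1 + K)) ^ 3) ^ n * K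
  refine ⟨D * exp (K / 8) * A, 8 * K, by positivity, fun s hs x ↦ ?_⟩
  obtain ⟨hs₀, -⟩ := pos_and_inv_le_of_mem_Icc hK hs
  have hP := (density_pos hs₀ x).le
  have hM : (4 * (2 * (1 + x ^ 2) * (1 + K)) ^ 3) ^ n =
      (4 * (2 * (1 + K)) ^ 3) ^ n * (1 + x ^ 2) ^ (3 * n) := by
    rw [pow_mul, ← mul_pow]; ring
  have hexp : exp (K / 8 - x ^ 2 / (4 * K)) * exp (x ^ 2 / (8 * K)) =
      exp (K / 8) * exp (-x ^ 2 / (8 * K)) := by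
    rw [← exp_add, ← exp_add]; congr 1; field_simp; ring
  calc |F s x| ≤ c * (4 * (2 * (1 + x ^ 2) * (1 + K)) ^ 3) ^ n * density s x :=
        hF s x _ hs₀ (ratioBound_of_mem_Icc hK hs x)
    _ ≤ |c| * (4 * (2 * (1 + x ^ 2) * (1 + K)) ^ 3) ^ n * (K * exp (K / 8 - x ^ 2 / (4 * K))) := by
        gcongr
        exacts [le_abs_self c, density_le_exp hK hs x]
    _ = D * exp (K / 8 - x ^ 2 / (4 * K)) * (1 + x ^ 2) ^ (3 * n) := by rw [hM]; ring
    _ ≤ D * exp (K / 8 - x ^ 2 / (4 * K)) * (A * exp (x ^ 2 / (8 * K))) := by gcongr; exact hA x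
    _ = D * exp (K / 8) * A * exp (-x ^ 2 / (8 * K)) := by linear_combination (D * A) * hexp

lemma RatioBound.one_le (h : RatioBound s x M) : 1 ≤ M := by
  linarith [h.2.2.2, abs_nonneg (log (density s x))]

lemma RatioBound.abs_log_add_one_le (h : RatioBound s x M) : |log (density s x) + 1| ≤ M :=
  (abs_add_le _ _).trans (by simpa using h.2.2.2)

lemma RatioBound.abs_div_density_le (h : RatioBound s x M) (hs : 0 < s) :
    |density' s x / density s x| ≤ M ∧ |density'' s x / density s x| ≤ M ∧
      |density''' s x / density s x| ≤ M := by
  have hP := density_pos hs x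
  simp only [abs_div, abs_of_pos hP, div_le_iff₀ hP]
  exact ⟨h.1, h.2.1, h.2.2.1⟩

lemma abs_mul_sub_sq_mul_le {a b c M : ℝ} (ha : |a| ≤ M) (hb : |b| ≤ M) (hc : |c| ≤ M)
    (hM : 1 ≤ M) :
    |a * c - a ^ 2 * b / 2| ≤ 2 * M ^ 3 := by
  have hM0 : 0 ≤ M := by linarith
  calc |a * c - a ^ 2 * b / 2| ≤ |a| * |c| + |a| ^ 2 * |b| / 2 := by
        refine (abs_sub _ _).trans_eq ?_
        rw [abs_mul, abs_div, abs_mul, abs_pow, abs_two]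
    _ ≤ M * M + M ^ 2 * M / 2 := by gcongr
    _ ≤ 2 * M ^ 3 := by nlinarith

lemma abs_sub_sq_sq_le {a b M : ℝ} (ha : |a| ≤ M) (hb : |b| ≤ M) (hM : 1 ≤ M) :
    |(b - a ^ 2) ^ 2| ≤ 4 * M ^ 4 := by
  have hM0 : 0 ≤ M := by linarith
  rw [abs_pow]
  calc |b - a ^ 2| ^ 2 ≤ (M + M ^ 2) ^ 2 := by
        gcongr
        refine (abs_sub _ _).trans ?_
        rw [abs_pow]
        gcongr
    _ ≤ (M ^ 2 + M ^ 2) ^ 2 := by gcongr; nlinarith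
    _ = 4 * M ^ 4 := by ring

lemma abs_density_mul_le (hs : 0 < s) {r c : ℝ} {n : ℕ} (hr : |r| ≤ c * M ^ n) :
    |density s x * r| ≤ c * M ^ n * density s x := by
  rw [abs_mul, abs_of_pos (density_pos hs x), mul_comm]
  exact mul_le_mul_of_nonneg_right hr (density_pos hs x).le

end RatioBound

noncomputable def fisherInfo (s : ℝ) : ℝ := ∫ x, density' s x ^ 2 / density s x

noncomputable def fisherIntegrandDeriv (s x : ℝ) : ℝ :=
  density' s x * density''' s x / density s x -
    density' s x ^ 2 * density'' s x / (2 * density s x ^ 2)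

-- `p · ((log p)'')²`
noncomputable def mcKeanIntegrand (s x : ℝ) : ℝ :=
  (density'' s x - density' s x ^ 2 / density s x) ^ 2 / density s x

lemma hasGaussianDecay_density_mul_log :
    HasGaussianDecay fun s x ↦ density s x * log (density s x) :=
  hasGaussianDecay_of_ratioBound 1 1 fun s x M hs h ↦
    abs_density_mul_le hs (by linarith [h.2.2.2])

lemma hasGaussianDecay_density''_mul_log_add_one :
    HasGaussianDecay fun s x ↦ density'' s x * (log (density s x) + 1) :=
  hasGaussianDecay_of_ratioBound 1 2 fun s x M hs h ↦ by
    have hP := (density_pos hs x).ne'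
    obtain ⟨-, hb, -⟩ := h.abs_div_density_le hs
    rw [show density'' s x * (log (density s x) + 1) =
      density s x * (density'' s x / density s x * (log (density s x) + 1)) by field_simp]
    refine abs_density_mul_le hs ?_
    rw [abs_mul, one_mul, sq]
    exact mul_le_mul hb h.abs_log_add_one_le (abs_nonneg _) (by linarith [h.one_le])

lemma hasGaussianDecay_density'_mul_log_add_one :
    HasGaussianDecay fun s x ↦ density' s x * (log (density s x) + 1) :=
  hasGaussianDecay_of_ratioBound 1 2 fun s x M hs h ↦ by
    have hP := (density_pos hs x).ne'
    obtain ⟨ha, -, -⟩ := h.abs_div_density_le hs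
    rw [show density' s x * (log (density s x) + 1) =
      density s x * (density' s x / density s x * (log (density s x) + 1)) by field_simp]
    refine abs_density_mul_le hs ?_
    rw [abs_mul, one_mul, sq]
    exact mul_le_mul ha h.abs_log_add_one_le (abs_nonneg _) (by linarith [h.one_le])

lemma hasGaussianDecay_fisherIntegrand :
    HasGaussianDecay fun s x ↦ density' s x ^ 2 / density s x :=
  hasGaussianDecay_of_ratioBound 1 2 fun s x M hs h ↦ by
    have hP := (density_pos hs x).ne'
    obtain ⟨ha, -, -⟩ := h.abs_div_density_le hs
    rw [show density' s x ^ 2 / density s x = density s x * (density' s x / density s x) ^ 2 by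
      field_simp]
    refine abs_density_mul_le hs ?_
    rw [abs_pow, one_mul]
    exact pow_le_pow_left₀ (abs_nonneg _) ha 2

lemma hasGaussianDecay_fisherIntegrandDeriv : HasGaussianDecay fisherIntegrandDeriv :=
  hasGaussianDecay_of_ratioBound 2 3 fun s x M hs h ↦ by
    have hP := (density_pos hs x).ne'
    obtain ⟨ha, hb, hc⟩ := h.abs_div_density_le hs
    rw [show fisherIntegrandDeriv s x =
      density s x * (density' s x / density s x * (density''' s x / density s x) -
        (density' s x / density s x) ^ 2 * (density'' s x / density s x) / 2) by
      rw [fisherIntegrandDeriv]; field_simp]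
    exact abs_density_mul_le hs (abs_mul_sub_sq_mul_le ha hb hc h.one_le)

lemma hasGaussianDecay_mcKeanPrimitive :
    HasGaussianDecay fun s x ↦ density' s x * density'' s x / density s x -
      density' s x ^ 3 / (2 * density s x ^ 2) :=
  hasGaussianDecay_of_ratioBound 2 3 fun s x M hs h ↦ by
    have hP := (density_pos hs x).ne'
    obtain ⟨ha, hb, -⟩ := h.abs_div_density_le hs
    rw [show density' s x * density'' s x / density s x - density' s x ^ 3 / (2 * density s x ^ 2) =
      density s x * (density' s x / density s x * (density'' s x / density s x) -
        (density' s x / density s x) ^ 2 * (density' s x / density s x) / 2) by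
      field_simp]
    exact abs_density_mul_le hs (abs_mul_sub_sq_mul_le ha ha hb h.one_le)

lemma hasGaussianDecay_mcKeanIntegrand : HasGaussianDecay mcKeanIntegrand :=
  hasGaussianDecay_of_ratioBound 4 4 fun s x M hs h ↦ by
    have hP := (density_pos hs x).ne'
    obtain ⟨ha, hb, -⟩ := h.abs_div_density_le hs
    rw [show mcKeanIntegrand s x =
      density s x * (density'' s x / density s x - (density' s x / density s x) ^ 2) ^ 2 by
      rw [mcKeanIntegrand]; field_simp]
    exact abs_density_mul_le hs (abs_sub_sq_sq_le ha hb h.one_le)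

section entropy

variable {s : ℝ}

lemma hasDerivAt_density_mul_log_variance (hs : 0 < s) (x : ℝ) :
    HasDerivAt (fun t ↦ density t x * log (density t x))
      (density'' s x * (log (density s x) + 1) / 2) s := by
  have hP := (density_pos hs x).ne'
  have h := hasDerivAt_density_variance hs x
  exact (h.mul (h.log hP)).congr_deriv (by field_simp)

lemma hasDerivAt_fisherIntegrand_variance (hs : 0 < s) (x : ℝ) :
    HasDerivAt (fun t ↦ density' t x ^ 2 / density t x) (fisherIntegrandDeriv s x) s := by
  have hP := (density_pos hs x).ne'
  exact (((hasDerivAt_density'_variance hs x).fun_pow 2).fun_div (hasDerivAt_density_variance hs x)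
    hP).congr_deriv (by rw [fisherIntegrandDeriv]; field_simp; ring)

lemma hasDerivAt_deBruijnPrimitive (hs : 0 < s) (x : ℝ) :
    HasDerivAt (fun x ↦ density' s x * (log (density s x) + 1))
      (density'' s x * (log (density s x) + 1) + density' s x ^ 2 / density s x) x := by
  have hP := (density_pos hs x).ne'
  exact ((hasDerivAt_density' hs x).mul (((hasDerivAt_density hs x).log hP).add_const 1))
    |>.congr_deriv (by field_simp)

lemma hasDerivAt_mcKeanPrimitive (hs : 0 < s) (x : ℝ) :
    HasDerivAt (fun x ↦ density' s x * density'' s x / density s x -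
        density' s x ^ 3 / (2 * density s x ^ 2))
      (fisherIntegrandDeriv s x + mcKeanIntegrand s x) x := by
  have hP := (density_pos hs x).ne'
  have h1 := hasDerivAt_density hs x
  have h2 := hasDerivAt_density' hs x
  have h3 := hasDerivAt_density'' hs x
  exact (((h2.fun_mul h3).fun_div h1 hP).fun_sub
    ((h2.fun_pow 3).fun_div ((h1.fun_pow 2).const_mul 2) (by simpa using hP))).congr_deriv
    (by rw [fisherIntegrandDeriv, mcKeanIntegrand]; field_simp; ring)

lemma integral_density''_mul_log_add_one (hs : 0 < s) :
    ∫ x, density'' s x * (log (density s x) + 1) = -fisherInfo s := by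
  have hint : Integrable fun x ↦ density'' s x * (log (density s x) + 1) :=
    hasGaussianDecay_density''_mul_log_add_one.integrable hs
      (Measurable.aestronglyMeasurable (by fun_prop))
  have hfisher : Integrable fun x ↦ density' s x ^ 2 / density s x :=
    hasGaussianDecay_fisherIntegrand.integrable hs
      (Measurable.aestronglyMeasurable (by fun_prop))
  have h := hasGaussianDecay_density'_mul_log_add_one.integral_deriv_eq_zero hs (hint.add hfisher)
    (hasDerivAt_deBruijnPrimitive hs)
  simp only [Pi.add_apply] at h
  rw [integral_add hint hfisher] at h
  rw [fisherInfo]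
  linarith

lemma hasDerivAt_ditherGaussEntropy (hs : 0 < s) :
    HasDerivAt ditherGaussEntropy (fisherInfo s / 2) s := by
  have hd := hasGaussianDecay_density_mul_log.hasDerivAt_integral
    (hasGaussianDecay_density''_mul_log_add_one.div_const 2) hs
    (fun t _ ↦ Measurable.aestronglyMeasurable (by fun_prop))
    (Measurable.aestronglyMeasurable (by fun_prop))
    (fun t ht x ↦ hasDerivAt_density_mul_log_variance ht x)
  rw [integral_div, integral_density''_mul_log_add_one hs] at hd
  refine (hd.fun_neg.congr_deriv (by ring)).congr_of_eventuallyEq ?_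
  filter_upwards [Ioi_mem_nhds hs] with t ht
  simp only [ditherGaussEntropy, ditherGaussDensity_eq_density ht]

lemma integral_mcKeanIntegrand_pos (hs : 0 < s) : 0 < ∫ x, mcKeanIntegrand s x := by
  have hP := fun x ↦ (density_pos hs x).ne'
  have hcont : Continuous (mcKeanIntegrand s) := by
    unfold mcKeanIntegrand; fun_prop (disch := exact hP _)
  have h0 : 0 < mcKeanIntegrand s 0 := by
    rw [mcKeanIntegrand, density'_zero hs, zero_pow two_ne_zero, zero_div, sub_zero]
    exact div_pos (sq_pos_of_neg (density''_zero_neg hs)) (density_pos hs 0)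
  refine (integral_pos_iff_support_of_nonneg (fun x ↦ ?_)
    (hasGaussianDecay_mcKeanIntegrand.integrable hs hcont.aestronglyMeasurable)).2
    (hcont.isOpen_support.measure_pos volume ⟨0, h0.ne'⟩)
  exact div_nonneg (sq_nonneg _) (density_pos hs x).le

lemma hasDerivAt_fisherInfo (hs : 0 < s) :
    HasDerivAt fisherInfo (-∫ x, mcKeanIntegrand s x) s := by
  have hJ' : Integrable (fisherIntegrandDeriv s) :=
    hasGaussianDecay_fisherIntegrandDeriv.integrable hs
      (Measurable.aestronglyMeasurable (by unfold fisherIntegrandDeriv; fun_prop))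
  have hR : Integrable (mcKeanIntegrand s) :=
    hasGaussianDecay_mcKeanIntegrand.integrable hs
      (Measurable.aestronglyMeasurable (by unfold mcKeanIntegrand; fun_prop))
  have hibp := hasGaussianDecay_mcKeanPrimitive.integral_deriv_eq_zero hs (hJ'.add hR)
    (hasDerivAt_mcKeanPrimitive hs)
  simp only [Pi.add_apply] at hibp
  rw [integral_add hJ' hR, add_eq_zero_iff_eq_neg] at hibp
  rw [← hibp]
  exact hasGaussianDecay_fisherIntegrand.hasDerivAt_integral
    hasGaussianDecay_fisherIntegrandDeriv hs
    (fun t _ ↦ Measurable.aestronglyMeasurable (by fun_prop))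
    hJ'.aestronglyMeasurable (fun t ht x ↦ hasDerivAt_fisherIntegrand_variance ht x)

lemma strictAntiOn_fisherInfo : StrictAntiOn fisherInfo (Ioi 0) :=
  strictAntiOn_of_deriv_neg (convex_Ioi 0)
    (fun _ hs ↦ (hasDerivAt_fisherInfo hs).continuousAt.continuousWithinAt) fun s hs ↦ by
      rw [interior_Ioi] at hs
      rw [(hasDerivAt_fisherInfo hs).deriv, neg_lt_zero]
      exact integral_mcKeanIntegrand_pos hs

end entropy

end DitherGauss

/-- `ρ(s) = h(√s·Z + ε)` is strictly concave on `(0, ∞)`. -/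
theorem stmt_16 : StrictConcaveOn ℝ (Set.Ioi (0 : ℝ)) ditherGaussEntropy := by
  refine StrictAntiOn.strictConcaveOn_of_deriv (convex_Ioi 0)
    (fun s hs ↦ (DitherGauss.hasDerivAt_ditherGaussEntropy hs).continuousAt.continuousWithinAt) ?_
  rw [interior_Ioi]
  intro a ha b hb hab
  rw [(DitherGauss.hasDerivAt_ditherGaussEntropy ha).deriv,
    (DitherGauss.hasDerivAt_ditherGaussEntropy hb).deriv]
  linarith [DitherGauss.strictAntiOn_fisherInfo ha hb hab]
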